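/- The function f(x) = log ‖x‖ on ℝ⁴ (four-dimensional Euclidean space with the standard norm) is biharmonic away from the origin: Δ(Δf)(x) = 0 for every x ≠ 0. -/

import Mathlib

/-!
For a function of `s = ‖x‖²` the chain rule gives `Δ (φ (‖x‖²)) = 4 s φ''(s) + 2 n φ'(s)` on `ℝⁿ`.
Since `log ‖x‖ = ½ log ‖x‖²`, this yields `Δ log ‖x‖ = (n - 2) / ‖x‖²` off the origin, and then
`Δ (c / ‖x‖²) = 2 c (4 - n) / ‖x‖⁴`, so `Δ² log ‖x‖ = 2 (n - 2) (4 - n) / ‖x‖⁴`, which vanishes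
exactly in dimension `4`.
-/

open scoped BigOperators

/-- The Laplacian of `f : ℝⁿ → ℝ`, as the sum of the second partial derivatives
`∑ i, ∂²f/∂xᵢ²`. -/
noncomputable def laplacian {n : ℕ} (f : EuclideanSpace ℝ (Fin n) → ℝ)
    (x : EuclideanSpace ℝ (Fin n)) : ℝ :=
  ∑ i : Fin n,
    fderiv ℝ (fun y => fderiv ℝ f y (EuclideanSpace.single i 1)) x (EuclideanSpace.single i 1)

open Filter Topology
open scoped InnerProductSpace

theorem Filter.EventuallyEq.laplacian_eq {n : ℕ} {f g : EuclideanSpace ℝ (Fin n) → ℝ}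
    {x : EuclideanSpace ℝ (Fin n)} (h : f =ᶠ[𝓝 x] g) : laplacian f x = laplacian g x := by
  refine Finset.sum_congr rfl fun i _ => ?_
  rw [EventuallyEq.fderiv_eq <|
    (h.fderiv (𝕜 := ℝ)).mono fun y hy => congrArg (· (EuclideanSpace.single i 1)) hy]

section NormSq

variable {E : Type*} [NormedAddCommGroup E] [InnerProductSpace ℝ E] {φ φ' : ℝ → ℝ}

theorem hasFDerivAt_comp_norm_sq {d : ℝ} {y : E} (hφ : HasDerivAt φ d (‖y‖ ^ 2)) :
    HasFDerivAt (fun z : E => φ (‖z‖ ^ 2)) (d • 2 • innerSL ℝ y) y :=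
  hφ.comp_hasFDerivAt y (hasFDerivAt_id y).norm_sq

theorem fderiv_fderiv_comp_norm_sq_apply {x : E} {φ'' : ℝ}
    (hφ : ∀ᶠ s in 𝓝 (‖x‖ ^ 2), HasDerivAt φ (φ' s) s)
    (hφ' : HasDerivAt φ' φ'' (‖x‖ ^ 2)) (v : E) :
    fderiv ℝ (fun y => fderiv ℝ (fun z => φ (‖z‖ ^ 2)) y v) x v
      = 4 * φ'' * ⟪x, v⟫_ℝ ^ 2 + 2 * φ' (‖x‖ ^ 2) * ‖v‖ ^ 2 := by
  have hfirst : (fun y => fderiv ℝ (fun z => φ (‖z‖ ^ 2)) y v)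
      =ᶠ[𝓝 x] fun y => 2 * φ' (‖y‖ ^ 2) * ⟪y, v⟫_ℝ := by
    have hnear := ((by fun_prop : Continuous fun y : E => ‖y‖ ^ 2).tendsto x).eventually hφ
    filter_upwards [hnear] with y hy
    rw [(hasFDerivAt_comp_norm_sq hy).fderiv]
    simp only [smul_apply, coe_innerSL_apply, nsmul_eq_mul, smul_eq_mul]
    ring
  have hsecond : HasFDerivAt (fun y => 2 * φ' (‖y‖ ^ 2) * ⟪y, v⟫_ℝ) _ x :=
    ((hasFDerivAt_comp_norm_sq hφ').const_mul 2).fun_mul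
      ((hasFDerivAt_id x).inner ℝ (hasFDerivAt_const v x))
  rw [hfirst.fderiv_eq, hsecond.fderiv]
  simp only [add_apply, smul_apply, zero_apply, ContinuousLinearMap.comp_apply,
    ContinuousLinearMap.prod_apply, ContinuousLinearMap.id_apply, fderivInnerCLM_apply,
    inner_zero_right, id_eq, real_inner_self_eq_norm_sq, zero_add, smul_eq_mul, coe_innerSL_apply,
    nsmul_eq_mul]
  ring

end NormSq

theorem laplacian_comp_norm_sq {n : ℕ} {φ φ' : ℝ → ℝ} {φ'' : ℝ} {x : EuclideanSpace ℝ (Fin n)}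
    (hφ : ∀ᶠ s in 𝓝 (‖x‖ ^ 2), HasDerivAt φ (φ' s) s)
    (hφ' : HasDerivAt φ' φ'' (‖x‖ ^ 2)) :
    laplacian (fun y => φ (‖y‖ ^ 2)) x = 4 * φ'' * ‖x‖ ^ 2 + 2 * n * φ' (‖x‖ ^ 2) := by
  rw [laplacian, Finset.sum_congr rfl fun i _ =>
    fderiv_fderiv_comp_norm_sq_apply hφ hφ' (EuclideanSpace.single i (1 : ℝ))]
  simp only [EuclideanSpace.inner_single_right, PiLp.norm_single, norm_one, Real.ringHom_apply,
    one_mul, one_pow, mul_one, Finset.sum_add_distrib, ← Finset.mul_sum,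
    ← EuclideanSpace.real_norm_sq_eq, Finset.sum_const, Finset.card_univ, Fintype.card_fin]
  ring

theorem laplacian_log_norm {n : ℕ} {x : EuclideanSpace ℝ (Fin n)} (hx : x ≠ 0) :
    laplacian (fun y => Real.log ‖y‖) x = (n - 2) / ‖x‖ ^ 2 := by
  have hpos : 0 < ‖x‖ ^ 2 := by positivity
  have hlog : (fun y : EuclideanSpace ℝ (Fin n) => Real.log ‖y‖)
      = fun y => (fun s => Real.log s / 2) (‖y‖ ^ 2) := by
    ext y
    change _ = Real.log (‖y‖ ^ 2) / 2
    rw [Real.log_pow]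
    push_cast
    ring
  rw [hlog, laplacian_comp_norm_sq (φ := fun s => Real.log s / 2) (φ' := fun s => s⁻¹ / 2)
    (φ'' := -((‖x‖ ^ 2) ^ 2)⁻¹ / 2)]
  · field_simp
    ring
  · filter_upwards [eventually_ne_nhds hpos.ne'] with s hs
    exact (Real.hasDerivAt_log hs).div_const 2
  · exact (hasDerivAt_inv hpos.ne').div_const 2

theorem laplacian_div_norm_sq {n : ℕ} (c : ℝ) {x : EuclideanSpace ℝ (Fin n)} (hx : x ≠ 0) :
    laplacian (fun y => c / ‖y‖ ^ 2) x = 2 * c * (4 - n) / ‖x‖ ^ 4 := by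
  have hpos : 0 < ‖x‖ ^ 2 := by positivity
  rw [laplacian_comp_norm_sq (φ := fun s => c / s) (φ' := fun s => -c / s ^ 2)
    (φ'' := 2 * c / (‖x‖ ^ 2) ^ 3)]
  · field_simp
    ring
  · filter_upwards [eventually_ne_nhds hpos.ne'] with s hs
    exact ((hasDerivAt_const s c).div (hasDerivAt_id' s) hs).congr_deriv (by simp)
  · refine ((hasDerivAt_const _ (-c)).div (hasDerivAt_pow 2 _)
      (pow_ne_zero 2 hpos.ne')).congr_deriv ?_
    field_simp
    ring

theorem laplacian_laplacian_log_norm {n : ℕ} {x : EuclideanSpace ℝ (Fin n)} (hx : x ≠ 0) :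
    laplacian (laplacian (fun y => Real.log ‖y‖)) x = 2 * (n - 2) * (4 - n) / ‖x‖ ^ 4 := by
  have hnear : laplacian (fun y : EuclideanSpace ℝ (Fin n) => Real.log ‖y‖)
      =ᶠ[𝓝 x] fun y => (n - 2) / ‖y‖ ^ 2 := by
    filter_upwards [eventually_ne_nhds hx] with y hy using laplacian_log_norm hy
  rw [hnear.laplacian_eq, laplacian_div_norm_sq _ hx]

/-- The function `log ‖x‖` on `ℝ⁴` is biharmonic away from the origin:
`Δ(Δ(log ‖x‖)) = 0` for `x ≠ 0`. -/
theorem biharmonic_log_norm_dim_four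
    (x : EuclideanSpace ℝ (Fin 4)) (hx : x ≠ 0) :
    laplacian (laplacian (fun y => Real.log ‖y‖)) x = 0 := by
  rw [laplacian_laplacian_log_norm hx]
  norm_num
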